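/- For every natural number n ≥ 1 there exists a set X of 2n points in Euclidean 4-space, each of norm 1/√2, with all pairwise distances at most 1, such that the number of unordered pairs {x, y} ⊆ X with ‖x − y‖ = 1 is at least n². (Consequently, the bound of 2·|X| − 2 edges for diameter graphs on the sphere of radius r > 1/√2 fails at radius r = 1/√2.) -/

import Mathlib

attribute [local instance] Classical.propDecidable

/-- The set of unordered pairs of points of `X` at distance exactly `1`. -/
noncomputable def unitPairs (X : Finset (EuclideanSpace ℝ (Fin 4))) :
    Finset (Finset (EuclideanSpace ℝ (Fin 4))) :=
  (X.powersetCard 2).filter (fun s => ∀ x ∈ s, ∀ y ∈ s, x ≠ y → ‖x - y‖ = 1)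

/-!
Two points `x, y` of norm `1/√2` satisfy `‖x - y‖² = 1 - 2⟪x, y⟫`, so they are at distance at
most `1` exactly when `⟪x, y⟫ ≥ 0`, and at distance `1` exactly when they are orthogonal. On a
quarter circle of radius `1/√2` the inner products are `cos (s - t) / 2 ≥ 0`, while any two points
on quarter circles in orthogonal planes are orthogonal. Taking `n` points on each of two such arcs
gives a set of diameter at most `1` in which all `n²` cross pairs are at distance `1`.
-/

open Real Finset
open scoped RealInnerProductSpace

section CriticalSphere

variable {E : Type*} [NormedAddCommGroup E] [InnerProductSpace ℝ E] {x y : E}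

theorem norm_sub_sq_of_norm_eq_one_div_sqrt_two (hx : ‖x‖ = 1 / √2) (hy : ‖y‖ = 1 / √2) :
    ‖x - y‖ ^ 2 = 1 - 2 * ⟪x, y⟫ := by
  have h : (1 / √2 : ℝ) ^ 2 = 1 / 2 := by rw [div_pow, sq_sqrt zero_le_two, one_pow]
  rw [norm_sub_sq_real, hx, hy, h]
  ring

theorem norm_sub_le_one_of_inner_nonneg (hx : ‖x‖ = 1 / √2) (hy : ‖y‖ = 1 / √2)
    (h : 0 ≤ ⟪x, y⟫) : ‖x - y‖ ≤ 1 :=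
  (pow_le_one_iff_of_nonneg (norm_nonneg _) two_ne_zero).mp <| by
    rw [norm_sub_sq_of_norm_eq_one_div_sqrt_two hx hy]
    linarith

theorem norm_sub_eq_one_of_inner_eq_zero (hx : ‖x‖ = 1 / √2) (hy : ‖y‖ = 1 / √2)
    (h : ⟪x, y⟫ = 0) : ‖x - y‖ = 1 :=
  (pow_eq_one_iff_of_nonneg (norm_nonneg _) two_ne_zero).mp <| by
    rw [norm_sub_sq_of_norm_eq_one_div_sqrt_two hx hy, h]
    ring

variable {ι : Type*} {e : ι → E} {i j k l : ι}

noncomputable def circlePoint (e : ι → E) (i j : ι) (t : ℝ) : E :=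
  (1 / √2) • (cos t • e i + sin t • e j)

theorem inner_circlePoint_circlePoint (he : Orthonormal ℝ e) (hij : i ≠ j) (s t : ℝ) :
    ⟪circlePoint e i j s, circlePoint e i j t⟫ = cos (s - t) / 2 := by
  simp [circlePoint, inner_add_left, inner_add_right, real_inner_smul_left,
    real_inner_smul_right, orthonormal_iff_ite.mp he, he.1 i, he.1 j, hij, hij.symm, cos_sub]
  field_simp
  rw [sq_sqrt zero_le_two]
  ring

theorem inner_circlePoint_eq_zero (he : Orthonormal ℝ e) (hik : i ≠ k) (hil : i ≠ l)
    (hjk : j ≠ k) (hjl : j ≠ l) (s t : ℝ) :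
    ⟪circlePoint e i j s, circlePoint e k l t⟫ = 0 := by
  simp [circlePoint, inner_add_left, inner_add_right, real_inner_smul_left,
    real_inner_smul_right, orthonormal_iff_ite.mp he, hik, hil, hjk, hjl]

theorem norm_circlePoint (he : Orthonormal ℝ e) (hij : i ≠ j) (t : ℝ) :
    ‖circlePoint e i j t‖ = 1 / √2 := by
  rw [norm_eq_sqrt_real_inner, inner_circlePoint_circlePoint he hij, sub_self, cos_zero,
    sqrt_div' 1 zero_le_two, sqrt_one]

theorem injOn_circlePoint (he : Orthonormal ℝ e) (hij : i ≠ j) :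
    Set.InjOn (circlePoint e i j) (Set.Icc 0 (π / 2)) := by
  intro s hs t ht hst
  have hcos : cos (s - t) = 1 := by
    have := inner_circlePoint_circlePoint he hij s t
    rw [hst, inner_circlePoint_circlePoint he hij, sub_self, cos_zero] at this
    linarith
  have := (cos_eq_one_iff_of_lt_of_lt (by linarith [hs.1, ht.2, pi_pos])
    (by linarith [hs.2, ht.1, pi_pos])).mp hcos
  linarith

def quarterArc (e : ι → E) (i j : ι) : Set E :=
  circlePoint e i j '' Set.Icc 0 (π / 2)

theorem quarterArc_infinite (he : Orthonormal ℝ e) (hij : i ≠ j) : (quarterArc e i j).Infinite :=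
  (Set.Icc_infinite (by positivity)).image (injOn_circlePoint he hij)

theorem norm_of_mem_quarterArc (he : Orthonormal ℝ e) (hij : i ≠ j) (hx : x ∈ quarterArc e i j) :
    ‖x‖ = 1 / √2 := by
  obtain ⟨t, -, rfl⟩ := hx
  exact norm_circlePoint he hij t

theorem inner_nonneg_of_mem_quarterArc (he : Orthonormal ℝ e) (hij : i ≠ j)
    (hx : x ∈ quarterArc e i j) (hy : y ∈ quarterArc e i j) : 0 ≤ ⟪x, y⟫ := by
  obtain ⟨s, hs, rfl⟩ := hx
  obtain ⟨t, ht, rfl⟩ := hy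
  rw [inner_circlePoint_circlePoint he hij]
  have := cos_nonneg_of_mem_Icc (x := s - t) ⟨by linarith [hs.1, ht.2], by linarith [hs.2, ht.1]⟩
  positivity

theorem inner_eq_zero_of_mem_quarterArc (he : Orthonormal ℝ e) (hik : i ≠ k) (hil : i ≠ l)
    (hjk : j ≠ k) (hjl : j ≠ l) (hx : x ∈ quarterArc e i j) (hy : y ∈ quarterArc e k l) :
    ⟪x, y⟫ = 0 := by
  obtain ⟨s, -, rfl⟩ := hx
  obtain ⟨t, -, rfl⟩ := hy
  exact inner_circlePoint_eq_zero he hik hil hjk hjl s t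

def crossedArcs (e : Fin 4 → E) : Set E :=
  quarterArc e 0 1 ∪ quarterArc e 2 3

section Crossed

variable {e : Fin 4 → E}

theorem norm_of_mem_crossedArcs (he : Orthonormal ℝ e) (hx : x ∈ crossedArcs e) :
    ‖x‖ = 1 / √2 := by
  rcases hx with hx | hx
  exacts [norm_of_mem_quarterArc he zero_ne_one hx, norm_of_mem_quarterArc he (by decide) hx]

theorem inner_eq_zero_of_mem_quarterArc_of_mem_quarterArc (he : Orthonormal ℝ e)
    (hx : x ∈ quarterArc e 0 1) (hy : y ∈ quarterArc e 2 3) : ⟪x, y⟫ = 0 :=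
  inner_eq_zero_of_mem_quarterArc he (by decide) (by decide) (by decide) (by decide) hx hy

theorem inner_nonneg_of_mem_crossedArcs (he : Orthonormal ℝ e) (hx : x ∈ crossedArcs e)
    (hy : y ∈ crossedArcs e) : 0 ≤ ⟪x, y⟫ := by
  rcases hx with hx | hx <;> rcases hy with hy | hy
  · exact inner_nonneg_of_mem_quarterArc he zero_ne_one hx hy
  · exact (inner_eq_zero_of_mem_quarterArc_of_mem_quarterArc he hx hy).ge
  · exact (real_inner_comm x y ▸ inner_eq_zero_of_mem_quarterArc_of_mem_quarterArc he hy hx).ge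
  · exact inner_nonneg_of_mem_quarterArc he (by decide) hx hy

theorem norm_sub_le_one_of_mem_crossedArcs (he : Orthonormal ℝ e) (hx : x ∈ crossedArcs e)
    (hy : y ∈ crossedArcs e) : ‖x - y‖ ≤ 1 :=
  norm_sub_le_one_of_inner_nonneg (norm_of_mem_crossedArcs he hx) (norm_of_mem_crossedArcs he hy)
    (inner_nonneg_of_mem_crossedArcs he hx hy)

theorem norm_sub_eq_one_of_mem_quarterArc (he : Orthonormal ℝ e) (hx : x ∈ quarterArc e 0 1)
    (hy : y ∈ quarterArc e 2 3) : ‖x - y‖ = 1 :=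
  norm_sub_eq_one_of_inner_eq_zero (norm_of_mem_crossedArcs he (.inl hx))
    (norm_of_mem_crossedArcs he (.inr hy))
    (inner_eq_zero_of_mem_quarterArc_of_mem_quarterArc he hx hy)

end Crossed

end CriticalSphere

theorem disjoint_of_forall_norm_sub_eq_one {E : Type*} [NormedAddCommGroup E] {S T : Finset E}
    (h : ∀ x ∈ S, ∀ y ∈ T, ‖x - y‖ = 1) : Disjoint S T :=
  Finset.disjoint_left.2 fun x hxS hxT => by simpa using h x hxS x hxT

theorem card_mul_card_le_card_unitPairs {S T : Finset (EuclideanSpace ℝ (Fin 4))}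
    (h : ∀ x ∈ S, ∀ y ∈ T, ‖x - y‖ = 1) : #S * #T ≤ #(unitPairs (S ∪ T)) := by
  have hne : ∀ x ∈ S, ∀ y ∈ T, x ≠ y := fun x hx y hy hxy => by simpa [hxy] using h x hx y hy
  rw [← card_product]
  refine card_le_card_of_injOn (fun p => {p.1, p.2}) ?_ ?_
  · rintro ⟨x, y⟩ hxy
    obtain ⟨hx, hy⟩ := mem_product.mp hxy
    refine mem_filter.mpr ⟨mem_powersetCard.mpr ⟨?_, card_pair (hne x hx y hy)⟩, ?_⟩
    · exact insert_subset (mem_union_left _ hx) (singleton_subset_iff.mpr (mem_union_right _ hy))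
    · simp only [mem_insert, mem_singleton]
      rintro a (rfl | rfl) b (rfl | rfl) hab
      exacts [absurd rfl hab, h a hx b hy, by rw [norm_sub_rev]; exact h b hx a hy, absurd rfl hab]
  · rintro ⟨x, y⟩ hxy ⟨x', y'⟩ hxy' (heq : ({x, y} : Finset _) = {x', y'})
    obtain ⟨hx, hy⟩ := mem_product.mp hxy
    obtain ⟨hx', hy'⟩ := mem_product.mp hxy'
    have hxmem : x ∈ ({x', y'} : Finset _) := heq ▸ mem_insert_self x {y}
    have hymem : y ∈ ({x', y'} : Finset _) := heq ▸ mem_insert_of_mem (mem_singleton_self y)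
    simp only [mem_insert, mem_singleton] at hxmem hymem
    rw [Prod.mk.injEq]
    exact ⟨hxmem.resolve_right (hne x hx y' hy'), hymem.resolve_left (hne x' hx' y hy).symm⟩

theorem many_edges_on_sphere_of_critical_radius_general (n : ℕ) :
    ∃ X : Finset (EuclideanSpace ℝ (Fin 4)), X.card = 2 * n ∧
      (∀ x ∈ X, ‖x‖ = 1 / Real.sqrt 2) ∧
      (∀ x ∈ X, ∀ y ∈ X, ‖x - y‖ ≤ 1) ∧
      (unitPairs X).card ≥ n ^ 2 := by
  have he := (EuclideanSpace.basisFun (Fin 4) ℝ).orthonormal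
  obtain ⟨S, hS, rfl⟩ := (quarterArc_infinite he zero_ne_one).exists_subset_card_eq n
  obtain ⟨T, hT, hTS⟩ :=
    (quarterArc_infinite he (by decide : (2 : Fin 4) ≠ 3)).exists_subset_card_eq #S
  have hST : ∀ x ∈ S ∪ T, x ∈ crossedArcs (EuclideanSpace.basisFun (Fin 4) ℝ) := fun x hx =>
    (mem_union.mp hx).imp (@hS x) (@hT x)
  have hunit : ∀ x ∈ S, ∀ y ∈ T, ‖x - y‖ = 1 := fun x hx y hy =>
    norm_sub_eq_one_of_mem_quarterArc he (hS hx) (hT hy)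
  refine ⟨S ∪ T, ?_, fun x hx => norm_of_mem_crossedArcs he (hST x hx),
    fun x hx y hy => norm_sub_le_one_of_mem_crossedArcs he (hST x hx) (hST y hy), ?_⟩
  · rw [card_union_of_disjoint (disjoint_of_forall_norm_sub_eq_one hunit), hTS, two_mul]
  · rw [sq]
    nth_rewrite 2 [← hTS]
    exact card_mul_card_le_card_unitPairs hunit

theorem many_edges_on_sphere_of_critical_radius (n : ℕ) (hn : n ≥ 1) :
    ∃ X : Finset (EuclideanSpace ℝ (Fin 4)), X.card = 2 * n ∧
      (∀ x ∈ X, ‖x‖ = 1 / Real.sqrt 2) ∧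
      (∀ x ∈ X, ∀ y ∈ X, ‖x - y‖ ≤ 1) ∧
      (unitPairs X).card ≥ n ^ 2 :=
  many_edges_on_sphere_of_critical_radius_general n
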